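/- arXiv:1606.01553 — 2 statements merged into one kernel-verified Lean document; each statement's English description precedes it below -/
import Mathlib

section
/- For every natural number k ≥ 3, the set of Farey-graph vertices adjacent to both F(k)/F(k−1) and F(k−1)/F(k−2) consists of exactly the two vertices F(k+1)/F(k) and F(k−2)/F(k−3); i.e., the two triangles of the Farey tessellation meeting the edge {F(k)/F(k−1), F(k−1)/F(k−2)} have third vertices F(k+1)/F(k) and F(k−2)/F(k−3). -/
open OnePoint

/-- Numerator of a Farey vertex: `∞` is represented as `1/0`, and a rational
`p` is represented in lowest terms as `p.num / p.den`. -/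
def vNum (x : OnePoint ℚ) : ℤ := OnePoint.rec 1 Rat.num x

/-- Denominator of a Farey vertex. -/
def vDen (x : OnePoint ℚ) : ℤ := OnePoint.rec 0 (fun p => (p.den : ℤ)) x

/-- The Farey graph: vertices are `ℚ ∪ {∞}`, and two distinct vertices with
lowest-terms representations `a/b` and `c/d` are adjacent iff `|a·d − b·c| = 1`. -/
def fareyGraph : SimpleGraph (OnePoint ℚ) where
  Adj x y := x ≠ y ∧ |vNum x * vDen y - vDen x * vNum y| = 1
  symm := by
    constructor
    rintro x y ⟨hxy, h⟩
    refine ⟨hxy.symm, ?_⟩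
    rw [show vNum y * vDen x - vDen y * vNum x
        = -(vNum x * vDen y - vDen x * vNum y) by ring, abs_neg]
    exact h
  loopless := by
    constructor
    rintro x ⟨hxx, -⟩
    exact hxx rfl

/-- The shifted Fibonacci sequence `F k = Nat.fib (k+1)`. -/
def F : ℕ → ℕ
  | 0 => 1
  | 1 => 1
  | k + 2 => F (k + 1) + F k

/-- The Farey vertex `F (k+1) / F k`. -/
def fibVertex (k : ℕ) : OnePoint ℚ := (((F (k + 1) : ℚ) / (F k : ℚ) : ℚ) : OnePoint ℚ)

lemma F_pos : ∀ k, 0 < F k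
  | 0 => one_pos
  | 1 => one_pos
  | k + 2 => by rw [F]; exact Nat.add_pos_left (F_pos (k+1)) _

lemma F_eq_fib : ∀ k, F k = Nat.fib (k + 1)
  | 0 => rfl
  | 1 => rfl
  | k + 2 => by rw [F, F_eq_fib (k+1), F_eq_fib k, Nat.add_comm]; exact (Nat.fib_add_two).symm

lemma F_coprime (k : ℕ) : Nat.Coprime (F (k+1)) (F k) := by
  rw [F_eq_fib, F_eq_fib]
  exact (Nat.fib_coprime_fib_succ (k+1)).symm

lemma vNum_fib (k : ℕ) : vNum (fibVertex k) = (F (k+1) : ℤ) := by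
  show (((F (k+1) : ℤ) : ℚ) / ((F k : ℤ) : ℚ)).num = _
  exact Rat.num_div_eq_of_coprime (by exact_mod_cast F_pos k) (by simpa using F_coprime k)

lemma vDen_fib (k : ℕ) : vDen (fibVertex k) = (F k : ℤ) := by
  show ((((F (k+1) : ℤ) : ℚ) / ((F k : ℤ) : ℚ)).den : ℤ) = _
  exact Rat.den_div_eq_of_coprime (by exact_mod_cast F_pos k) (by simpa using F_coprime k)

lemma F_cast_rec (k : ℕ) : (F (k+2) : ℤ) = F (k+1) + F k := by rw [F]; push_cast; ring

lemma cassini : ∀ j, ((F (j+1)) : ℤ)^2 - F (j+2) * F j = (-1)^(j+1)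
  | 0 => by norm_num [F]
  | j + 1 => by
    have h := cassini j
    have r1 := F_cast_rec (j+1)
    have r2 := F_cast_rec j
    have : ((-1:ℤ))^(j+1+1) = -(-1)^(j+1) := by ring
    rw [this]
    linear_combination (-1:ℤ) * h - (F (j+1):ℤ) * r1 + (F (j+2):ℤ) * r2

lemma cassini2 (j : ℕ) : ((F (j+1)) : ℤ) * F (j+2) - F j * F (j+3) = (-1)^(j+1) := by
  linear_combination cassini j - (F j:ℤ) * F_cast_rec (j+1) + (F (j+1):ℤ) * F_cast_rec j

example : True := trivial

lemma F_two_le (n : ℕ) : 2 ≤ F (n+2) := by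
  rw [F]; have := F_pos (n+1); have := F_pos n; omega

lemma fibVertex_ne (a b : ℕ) (h : F (a+1) ≠ F (b+1)) : fibVertex a ≠ fibVertex b := by
  intro hEq
  exact h (by exact_mod_cast (vNum_fib a ▸ vNum_fib b ▸ congrArg vNum hEq))

lemma adj_fib (a b : ℕ) (hne : F (a+1) ≠ F (b+1))
    (h : |(F (a+1) : ℤ) * F b - F a * F (b+1)| = 1) :
    fareyGraph.Adj (fibVertex a) (fibVertex b) :=
  ⟨fibVertex_ne a b hne, by rw [vNum_fib, vDen_fib, vNum_fib, vDen_fib]; exact h⟩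

lemma F_succ_lt (n : ℕ) : F (n+1) < F (n+2) := by
  rw [F]; have := F_pos n; omega

lemma F_lt' (a d : ℕ) : F (a+1) < F (a+1+(d+1)) := by
  induction d with
  | zero => exact F_succ_lt a
  | succ d ih =>
    refine lt_trans ih ?_
    rw [show a+1+(d+1) = (a+d+1)+1 by omega, show a+1+(d+1+1) = (a+d+1)+2 by omega]
    exact F_succ_lt (a+d+1)


/-- For `k ≥ 3`, the Farey vertices adjacent to both
`F(k)/F(k−1)` and `F(k−1)/F(k−2)` are exactly `F(k+1)/F(k)` and `F(k−2)/F(k−3)`. -/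
theorem farey_fib_edge_third_vertices (k : ℕ) (hk : 3 ≤ k) :
    {x : OnePoint ℚ |
        fareyGraph.Adj x (fibVertex (k - 1)) ∧ fareyGraph.Adj x (fibVertex (k - 2))} =
      {fibVertex k, fibVertex (k - 3)} := by
  obtain ⟨j, rfl⟩ : ∃ j, k = j + 3 := ⟨k - 3, by omega⟩
  have e1 : j + 3 - 1 = j + 2 := by omega
  have e2 : j + 3 - 2 = j + 1 := by omega
  have e3 : j + 3 - 3 = j := by omega
  rw [e1, e2, e3]
  ext x
  simp only [Set.mem_setOf_eq, Set.mem_insert_iff, Set.mem_singleton_iff]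
  constructor
  · rintro ⟨⟨hne1, h1⟩, ⟨hne2, h2⟩⟩
    induction x using OnePoint.rec with
    | infty =>
      exfalso
      rw [vNum_fib, vDen_fib] at h1
      have hv1 : vNum (∞ : OnePoint ℚ) = 1 := rfl
      have hv2 : vDen (∞ : OnePoint ℚ) = 0 := rfl
      rw [hv1, hv2] at h1
      have h2le := F_two_le j
      rw [show (1:ℤ) * (F (j+2):ℤ) - 0 * (F (j+3):ℤ) = (F (j+2):ℤ) by ring] at h1
      rw [abs_of_nonneg (by positivity)] at h1
      omega
    | coe q =>
      rw [vNum_fib, vDen_fib] at h1 h2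
      have hq1 : vNum (q : OnePoint ℚ) = q.num := rfl
      have hq2 : vDen (q : OnePoint ℚ) = (q.den : ℤ) := rfl
      rw [hq1, hq2, show j+2+1 = j+3 by omega] at h1
      rw [hq1, hq2, show j+1+1 = j+2 by omega] at h2
      have hmpos : (0:ℤ) < (q.den : ℤ) := by exact_mod_cast q.pos
      have hC : (F (j+2) : ℤ)^2 - F (j+3) * F (j+1) = (-1)^(j+2) := cassini (j+1)
      have key1 : q.num * ((F (j+2) : ℤ)^2 - F (j+3) * F (j+1)) =
          (q.num * F (j+2) - q.den * F (j+3)) * F (j+2)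
            - (q.num * F (j+1) - q.den * F (j+2)) * F (j+3) := by ring
      have key2 : (q.den : ℤ) * ((F (j+2) : ℤ)^2 - F (j+3) * F (j+1)) =
          (q.num * F (j+2) - q.den * F (j+3)) * F (j+1)
            - (q.num * F (j+1) - q.den * F (j+2)) * F (j+2) := by ring
      rw [hC] at key1 key2
      have hu := (abs_eq (by norm_num : (0:ℤ) ≤ 1)).mp h1
      have hv := (abs_eq (by norm_num : (0:ℤ) ≤ 1)).mp h2
      have hε : ((-1:ℤ))^(j+2) = 1 ∨ ((-1:ℤ))^(j+2) = -1 := by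
        rcases Nat.even_or_odd (j+2) with h|h
        · exact Or.inl h.neg_one_pow
        · exact Or.inr h.neg_one_pow
      have ra := F_cast_rec (j+2)
      have rb := F_cast_rec (j+1)
      have rc := F_cast_rec j
      rw [show j+2+2 = j+4 by omega, show j+2+1 = j+3 by omega] at ra
      rw [show j+1+2 = j+3 by omega, show j+1+1 = j+2 by omega] at rb
      have hd1 : (1:ℤ) ≤ F j := by exact_mod_cast F_pos j
      have hd2 : (1:ℤ) ≤ F (j+1) := by exact_mod_cast F_pos (j+1)
      have hres : (q.num = (F (j+4) : ℤ) ∧ (q.den : ℤ) = (F (j+3) : ℤ)) ∨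
          (q.num = (F (j+1) : ℤ) ∧ (q.den : ℤ) = (F j : ℤ)) := by
        rcases hu with hu|hu <;> rcases hv with hv|hv <;> rcases hε with hε|hε <;>
          rw [hε] at key1 key2 <;> rw [hu, hv] at key1 key2 <;> omega
      have hden : ∀ (r : ℕ), q.num = (F (r+1) : ℤ) → (q.den : ℤ) = (F r : ℤ) →
          (q : OnePoint ℚ) = fibVertex r := by
        intro r h1' h2'
        show _ = ((((F (r + 1) : ℚ) / (F r : ℚ) : ℚ) : OnePoint ℚ))
        congr 1
        have hqn : (q.num : ℚ) = (F (r+1) : ℚ) := by exact_mod_cast h1'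
        have hqd : (q.den : ℚ) = (F r : ℚ) := by exact_mod_cast h2'
        rw [← Rat.num_div_den q, hqn, hqd]
      rcases hres with ⟨ha, hb⟩ | ⟨ha, hb⟩
      · exact Or.inl (hden (j+3) ha hb)
      · exact Or.inr (hden j ha hb)
  · rintro (rfl | rfl)
    · constructor
      · refine adj_fib (j+3) (j+2) (F_lt' (j+2) 0).ne' ?_
        rw [show (F (j+4) : ℤ) * F (j+2) - F (j+3) * F (j+3) = -((F (j+3):ℤ)^2 - F (j+4) * F (j+2)) by ring,
          cassini (j+2), abs_neg, abs_pow, abs_neg, abs_one, one_pow]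
      · refine adj_fib (j+3) (j+1) (F_lt' (j+1) 1).ne' ?_
        rw [show (F (j+4) : ℤ) * F (j+1) - F (j+3) * F (j+2) = -((F (j+2):ℤ) * F (j+3) - F (j+1) * F (j+4)) by ring,
          cassini2 (j+1), abs_neg, abs_pow, abs_neg, abs_one, one_pow]
    · constructor
      · refine adj_fib j (j+2) (F_lt' j 1).ne ?_
        rw [cassini2 j, abs_pow, abs_neg, abs_one, one_pow]
      · refine adj_fib j (j+1) (F_lt' j 0).ne ?_
        rw [show (F (j+1) : ℤ) * F (j+1) - F j * F (j+2) = (F (j+1):ℤ)^2 - F (j+2) * F j by ring,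
          cassini j, abs_pow, abs_neg, abs_one, one_pow]
end

section
/- The Farey graph is connected: any two vertices of 𝔉 (elements of ℚ ∪ {∞}) are joined by a walk in 𝔉, so the Farey distance between any two slopes is well defined and finite. -/
open OnePoint

lemma vNum_coe (q : ℚ) : vNum (q : OnePoint ℚ) = q.num := rfl
lemma vDen_coe (q : ℚ) : vDen (q : OnePoint ℚ) = (q.den : ℤ) := rfl
lemma vNum_infty : vNum (∞ : OnePoint ℚ) = 1 := rfl
lemma vDen_infty : vDen (∞ : OnePoint ℚ) = 0 := rfl

lemma adj_infty_of_den_one (q : ℚ) (h : q.den = 1) :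
    fareyGraph.Adj (∞ : OnePoint ℚ) (q : OnePoint ℚ) := by
  refine ⟨(OnePoint.infty_ne_coe q), ?_⟩
  rw [vNum_infty, vDen_infty, vNum_coe, vDen_coe, h]
  norm_num

lemma reach_aux : ∀ n : ℕ, ∀ q : ℚ, q.den = n →
    fareyGraph.Reachable (q : OnePoint ℚ) ∞ := by
  intro n
  induction n using Nat.strong_induction_on with
  | _ n ih =>
    intro q hq
    rcases eq_or_ne q.den 1 with h1 | h1
    · exact (adj_infty_of_den_one q h1).symm.reachable
    · have hbpos : 0 < (q.den : ℤ) := by exact_mod_cast q.pos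
      set a : ℤ := q.num with ha
      set b : ℤ := (q.den : ℤ) with hb
      have hcop : Int.gcd a b = 1 := q.reduced
      have hbez : a * Int.gcdA a b + b * Int.gcdB a b = 1 := by
        have := Int.gcd_eq_gcd_ab a b
        omega
      set u : ℤ := Int.gcdA a b with hu
      set d : ℤ := u % b with hd
      have hd0 : 0 ≤ d := Int.emod_nonneg u (by omega)
      have hdb : d < b := Int.emod_lt_of_pos u hbpos
      have h2 : b ∣ u - d := Int.dvd_self_sub_of_emod_eq rfl
      obtain ⟨k, hk⟩ := h2
      set c : ℤ := -(Int.gcdB a b) - a * k with hcdef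
      have hkey : a * d - b * c = 1 := by
        have : a * d = a * u - a * (b * k) := by rw [← hk]; ring
        rw [hcdef]; nlinarith [hbez]
      have hdpos : 0 < d := by
        rcases lt_or_eq_of_le hd0 with h | h
        · exact h
        · exfalso
          have hbc : b * (-c) = 1 := by rw [← h] at hkey; linarith
          have hb1 : b = 1 := Int.eq_one_of_mul_eq_one_right (le_of_lt hbpos) hbc
          rw [hb] at hb1
          exact h1 (by exact_mod_cast hb1)
      -- y = c / d in lowest terms
      have hcopcd : Int.gcd c d = 1 := by
        have : IsCoprime c d := ⟨-b, a, by linarith [hkey]⟩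
        exact Int.isCoprime_iff_gcd_eq_one.mp this
      have hdtn : (d.toNat : ℤ) = d := Int.toNat_of_nonneg hd0
      have hdna : d.natAbs = d.toNat := by omega
      set y : ℚ := Rat.mk' c d.toNat (by omega)
        (by rw [Nat.Coprime, ← hdna]; exact hcopcd) with hy
      have hynum : y.num = c := rfl
      have hyden : (y.den : ℤ) = d := by rw [hy]; exact hdtn
      have hadj : fareyGraph.Adj (q : OnePoint ℚ) (y : OnePoint ℚ) := by
        constructor
        · intro hqy
          have : q = y := OnePoint.coe_eq_coe.mp hqy
          rw [this] at ha hb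
          rw [hynum] at ha; rw [hyden] at hb
          nlinarith [hkey]
        · rw [vNum_coe, vDen_coe, vNum_coe, vDen_coe, hynum, hyden, ← ha, ← hb, hkey]
          norm_num
      have hlt : y.den < n := by omega
      exact hadj.reachable.trans (ih y.den hlt y rfl)

lemma reach_infty (q : ℚ) : fareyGraph.Reachable (q : OnePoint ℚ) ∞ :=
  reach_aux q.den q rfl

/-- The Farey graph is connected: any two vertices are joined
by a walk, so the Farey distance is well defined and finite. -/
theorem fareyGraph_connected : fareyGraph.Connected := by
  rw [SimpleGraph.connected_iff]
  refine ⟨fun x y => ?_, ⟨∞⟩⟩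
  have hx : fareyGraph.Reachable x ∞ := by
    induction x using OnePoint.rec with
    | infty => exact SimpleGraph.Reachable.refl _
    | coe q => exact reach_infty q
  have hy : fareyGraph.Reachable y ∞ := by
    induction y using OnePoint.rec with
    | infty => exact SimpleGraph.Reachable.refl _
    | coe q => exact reach_infty q
  exact hx.trans hy.symm
end
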